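/- arXiv:1307.3688 — 4 statements merged into one kernel-verified Lean document; each statement's English description precedes it below -/
import Mathlib

section
/- Suppose (v₋,u₋,θ₋), (v_m,u_m,θ_m) with v₋,v_m,θ₋,θ_m > 0 and a speed s₁ < 0 satisfy the Rankine–Hugoniot conditions and the entropy condition for a 1-shock, and let d₋ = ((γ−1)/2)(v_m−v₋)/v_m with |d₋| < 1. Then s₁² = (γ p₋ / v_m)(1 − d₋/(1+d₋)), θ_m = θ₋(1 − ((v₋+v_m)/v₋)·d₋/(1+d₋)), and v₋ > v_m (so d₋ < 0). -/
set_option maxHeartbeats 800000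


/-- **Shock state relations (2.7).** If `(v₋,u₋,θ₋)`, `(v_m,u_m,θ_m)` and a speed
`s₁ < 0` satisfy the Rankine–Hugoniot conditions and the entropy condition for a
1-shock, and `d₋ = ((γ-1)/2)(v_m-v₋)/v_m` with `|d₋| < 1`, then
`s₁² = (γp₋/v_m)(1 - d₋/(1+d₋))`, `θ_m = θ₋(1 - ((v₋+v_m)/v₋)d₋/(1+d₋))` and
`v₋ > v_m`. -/
theorem shock_state_relations
    (R γ : ℝ) (hR : 0 < R) (hγ : 1 < γ)
    (vminus uminus θminus vm um θm s1 dminus : ℝ)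
    (hvminus : 0 < vminus) (hvm : 0 < vm) (hθminus : 0 < θminus) (hθm : 0 < θm)
    (hs1 : s1 < 0)
    -- Rankine–Hugoniot conditions
    (RH1 : -s1 * (vm - vminus) - (um - uminus) = 0)
    (RH2 : -s1 * (um - uminus) + (R * θm / vm - R * θminus / vminus) = 0)
    (RH3 : -s1 * ((R * θm / (γ - 1) + um ^ 2 / 2) - (R * θminus / (γ - 1) + uminus ^ 2 / 2))
        + (R * θm / vm * um - R * θminus / vminus * uminus) = 0)
    -- entropy condition: -√(γp₋/v₋) > s₁ > -√(γp_m/v_m)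
    (ent1 : s1 < -Real.sqrt (γ * (R * θminus / vminus) / vminus))
    (ent2 : -Real.sqrt (γ * (R * θm / vm) / vm) < s1)
    (hd : dminus = (γ - 1) / 2 * ((vm - vminus) / vm))
    (hd1 : |dminus| < 1) :
    s1 ^ 2 = γ * (R * θminus / vminus) / vm * (1 - dminus / (1 + dminus)) ∧
    θm = θminus * (1 - (vminus + vm) / vminus * (dminus / (1 + dminus))) ∧
    vm < vminus := by
  obtain ⟨hdlo, hdhi⟩ := abs_lt.mp hd1
  have h1pd : 0 < 1 + dminus := by linarith
  have h1pd' : (1 : ℝ) + dminus ≠ 0 := ne_of_gt h1pd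
  have hvm' : vm ≠ 0 := ne_of_gt hvm
  have hv' : vminus ≠ 0 := ne_of_gt hvminus
  have hγ1 : γ - 1 ≠ 0 := by intro h; nlinarith
  have hs1ne : s1 ≠ 0 := ne_of_lt hs1
  -- momentum relation with velocity eliminated
  have h2 : s1 ^ 2 * (vm - vminus) + (R * θm / vm - R * θminus / vminus) = 0 := by
    linear_combination RH2 - s1 * RH1
  -- Hugoniot relation
  have hsH : s1 * ((R * θm / (γ - 1) - R * θminus / (γ - 1))
      + (R * θm / vm + R * θminus / vminus) / 2 * (vm - vminus)) = 0 := by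
    linear_combination (-1) * RH3 + ((um + uminus) / 2) * RH2
      - ((R * θm / vm + R * θminus / vminus) / 2) * RH1
  have hH : (R * θm / (γ - 1) - R * θminus / (γ - 1))
      + (R * θm / vm + R * θminus / vminus) / 2 * (vm - vminus) = 0 :=
    (mul_eq_zero.mp hsH).resolve_left hs1ne
  -- polynomial (denominator-free) versions
  have hd2 : dminus * (2 * vm) = (γ - 1) * (vm - vminus) := by
    rw [hd]; field_simp
  field_simp at hH h2
  -- hH : (R*θm - R*θminus)*(vm*vminus*2) + (R*θm*vminus + R*θminus*vm)*(vm-vminus)*(γ-1) = 0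
  -- h2 : s1^2*(vm-vminus)*(vm*vminus) + (R*θm*vminus - vm*(R*θminus)) = 0
  -- θm relation, polynomial form
  have hθ2 : θm * (vminus * (1 + dminus)) * (2 * R * vm)
      = θminus * (vminus - vm * dminus) * (2 * R * vm) := by
    linear_combination hH + (R * (θm * vminus + θminus * vm)) * hd2
  have h2Rvm : (2 : ℝ) * R * vm ≠ 0 := by positivity
  have hθ3 : θm * (vminus * (1 + dminus)) = θminus * (vminus - vm * dminus) :=
    mul_right_cancel₀ h2Rvm hθ2
  -- entropy gives s1^2 > γ p₋ / v₋
  have hX : (0 : ℝ) ≤ γ * (R * θminus / vminus) / vminus := by positivity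
  have hsq : γ * (R * θminus / vminus) / vminus < s1 ^ 2 := by
    have h := Real.sq_sqrt hX
    have h2 := Real.sqrt_nonneg (γ * (R * θminus / vminus) / vminus)
    nlinarith [ent1]
  -- vm ≠ vminus
  have hne : vm ≠ vminus := by
    intro heq
    have hp : R * θm / vm = R * θminus / vminus := by
      rw [heq]
      rw [heq] at h2
      have h8 : R * θm * vminus = R * θminus * vminus := by linear_combination h2
      have h9 : R * θm = R * θminus := mul_right_cancel₀ hv' h8
      rw [h9]
    have hXm : (0 : ℝ) ≤ γ * (R * θm / vm) / vm := by positivity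
    rw [heq] at ent2 hp
    rw [hp] at ent2
    linarith
  -- s1² relation, polynomial form
  have hs2 : s1 ^ 2 * ((vm * vminus) * (1 + dminus)) * (vm - vminus)
      = (γ * (R * θminus)) * (vm - vminus) := by
    linear_combination (1 + dminus) * h2 - R * hθ3 + (R * θminus) * hd2
  have hs1sq0 : s1 ^ 2 * ((vm * vminus) * (1 + dminus)) = γ * (R * θminus) :=
    mul_right_cancel₀ (sub_ne_zero.mpr hne) hs2
  -- θm goal
  have hθ : θm = θminus * (1 - (vminus + vm) / vminus * (dminus / (1 + dminus))) := by
    field_simp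
    linear_combination hθ3
  -- s1² goal
  have hs1sq : s1 ^ 2 = γ * (R * θminus / vminus) / vm * (1 - dminus / (1 + dminus)) := by
    field_simp
    linear_combination hs1sq0
  refine ⟨hs1sq, hθ, ?_⟩
  -- vm < vminus
  have hXv : (γ * (R * θminus / vminus) / vminus) * vminus ^ 2 = γ * (R * θminus) := by
    field_simp
  have hsqp : γ * (R * θminus) < s1 ^ 2 * vminus ^ 2 := by
    have := mul_lt_mul_of_pos_right hsq (by positivity : (0:ℝ) < vminus ^ 2)
    rwa [hXv] at this
  have hs1p : 0 < s1 ^ 2 := by positivity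
  have h7 : vm * vminus * (1 + dminus) < vminus ^ 2 := by
    nlinarith [hs1sq0, hsqp, hs1p]
  have h9 : vm * (1 + dminus) < vminus := by nlinarith [h7, hvminus]
  nlinarith [h9, hd2, hγ]
end

section
/- Let (V₁,U₁,Θ₁) be a smooth solution of the viscous 1-shock profile ODE system with far-field limits (v₋,u₋,θ₋) at −∞ and (v_m,u_m,θ_m) at +∞ and with derivatives vanishing at ±∞, where s₁ and the far-field states satisfy the Rankine–Hugoniot conditions. Then for all ξ ∈ ℝ: U₁ = u_m − s₁(V₁ − v_m), Θ₁ = θ_m + (1/R)(−s₁²(V₁−v_m)² + (p_m − s₁²v_m)(V₁−v_m)), and V₁ satisfies the scalar ODE κV₁′ = H₁(V₁), where H₁(V) = s₁RV[((γ+1)/2)s₁²(V−v_m)² − (γp_m − s₁²v_m)(V−v_m)] / [(γ−1)(p_m − s₁²v_m − 2s₁²(V−v_m))]. -/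
open Filter

noncomputable section

/-- The function `H₁` appearing in the scalar profile equation `κV₁' = H₁(V₁)`. -/
def H1fun (R γ s1 vm pm : ℝ) (V : ℝ) : ℝ :=
  s1 * R * V * ((γ + 1) / 2 * s1 ^ 2 * (V - vm) ^ 2 - (γ * pm - s1 ^ 2 * vm) * (V - vm)) /
    ((γ - 1) * (pm - s1 ^ 2 * vm - 2 * s1 ^ 2 * (V - vm)))

/-!
Each equation of the profile system is a total derivative, so each conserved flux is constant
along the profile and equals its limit at `+∞`. The mass and momentum fluxes express `U₁` and
`Θ₁` as functions of `V₁`; substituting them into the energy flux gives `κΘ₁'` as a function of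
`V₁`, while differentiating `Θ₁ = Θ(V₁)` gives `RΘ₁' = (p_m - s₁²v_m - 2s₁²(V₁ - v_m))V₁'`.
Dividing by the non-vanishing factor yields `κV₁' = H₁(V₁)`.
-/

open Topology

theorem eq_of_deriv_eq_zero_of_tendsto {𝕜 G : Type*} [RCLike 𝕜] [NormedAddCommGroup G]
    [NormedSpace 𝕜 G] {f : 𝕜 → G} {l : Filter 𝕜} [l.NeBot] {c : G}
    (hf : Differentiable 𝕜 f) (hf' : ∀ x, deriv f x = 0) (hc : Tendsto f l (𝓝 c)) (x : 𝕜) :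
    f x = c :=
  tendsto_nhds_unique tendsto_const_nhds (hc.congr fun y => is_const_of_deriv_eq_zero hf hf' y x)

namespace ShockProfile

variable {R γ κ s vm um θm : ℝ} {V U Θ : ℝ → ℝ}

theorem velocity_eq (hV : Differentiable ℝ V) (hU : Differentiable ℝ U)
    (ode : ∀ ξ, -s * deriv V ξ - deriv U ξ = 0)
    (hVlim : Tendsto V atTop (𝓝 vm)) (hUlim : Tendsto U atTop (𝓝 um)) (ξ : ℝ) :
    U ξ = um - s * (V ξ - vm) := by
  have hmass : -s * V ξ - U ξ = -s * vm - um :=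
    eq_of_deriv_eq_zero_of_tendsto ((hV.const_mul (-s)).sub hU)
    (fun η => (((hV η).hasDerivAt.const_mul (-s)).sub (hU η).hasDerivAt).deriv.trans (ode η))
    ((hVlim.const_mul (-s)).sub hUlim) ξ
  linear_combination -hmass

theorem momentum_integral (hV : Differentiable ℝ V) (hV0 : ∀ ξ, V ξ ≠ 0)
    (hU : Differentiable ℝ U) (hΘ : Differentiable ℝ Θ)
    (ode : ∀ ξ, -s * deriv U ξ + deriv (fun η => R * Θ η / V η) ξ = 0) (hvm : vm ≠ 0)
    (hVlim : Tendsto V atTop (𝓝 vm)) (hUlim : Tendsto U atTop (𝓝 um))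
    (hΘlim : Tendsto Θ atTop (𝓝 θm)) (ξ : ℝ) :
    -s * U ξ + R * Θ ξ / V ξ = -s * um + R * θm / vm := by
  have hp : Differentiable ℝ (fun η => R * Θ η / V η) := (hΘ.const_mul R).div hV hV0
  exact eq_of_deriv_eq_zero_of_tendsto ((hU.const_mul (-s)).add hp)
    (fun η => (((hU η).hasDerivAt.const_mul (-s)).add (hp η).hasDerivAt).deriv.trans (ode η))
    ((hUlim.const_mul (-s)).add ((hΘlim.const_mul R).div hVlim hvm)) ξ

theorem energy_integral (hV : Differentiable ℝ V) (hV0 : ∀ ξ, V ξ ≠ 0)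
    (hU : Differentiable ℝ U) (hΘ : Differentiable ℝ Θ) (hΘ' : Differentiable ℝ (deriv Θ))
    (ode : ∀ ξ, -s * deriv (fun η => R / (γ - 1) * Θ η + U η ^ 2 / 2) ξ
        + deriv (fun η => R * Θ η / V η * U η) ξ
        = deriv (fun η => κ * deriv Θ η / V η) ξ) (hvm : vm ≠ 0)
    (hVlim : Tendsto V atTop (𝓝 vm)) (hUlim : Tendsto U atTop (𝓝 um))
    (hΘlim : Tendsto Θ atTop (𝓝 θm)) (hΘ'lim : Tendsto (deriv Θ) atTop (𝓝 0)) (ξ : ℝ) :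
    -s * (R / (γ - 1) * Θ ξ + U ξ ^ 2 / 2) + R * Θ ξ / V ξ * U ξ - κ * deriv Θ ξ / V ξ
      = -s * (R / (γ - 1) * θm + um ^ 2 / 2) + R * θm / vm * um := by
  have hE : Differentiable ℝ (fun η => R / (γ - 1) * Θ η + U η ^ 2 / 2) :=
    (hΘ.const_mul _).add ((hU.pow 2).div_const 2)
  have hQ : Differentiable ℝ (fun η => R * Θ η / V η * U η) :=
    ((hΘ.const_mul R).div hV hV0).mul hU
  have hW : Differentiable ℝ (fun η => κ * deriv Θ η / V η) := (hΘ'.const_mul κ).div hV hV0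
  have hflux := eq_of_deriv_eq_zero_of_tendsto (((hE.const_mul (-s)).add hQ).sub hW)
    (fun η => ((((hE η).hasDerivAt.const_mul (-s)).add (hQ η).hasDerivAt).sub
      (hW η).hasDerivAt).deriv.trans (by linear_combination ode η))
    (((((hΘlim.const_mul (R / (γ - 1))).add ((hUlim.pow 2).div_const 2)).const_mul (-s)).add
      (((hΘlim.const_mul R).div hVlim hvm).mul hUlim)).sub ((hΘ'lim.const_mul κ).div hVlim hvm)) ξ
  simpa using hflux

theorem temperature_eq_of_momentum {v u θ : ℝ} (hR : R ≠ 0) (hv : v ≠ 0) (hvm : vm ≠ 0)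
    (hu : u = um - s * (v - vm)) (hmom : -s * u + R * θ / v = -s * um + R * θm / vm) :
    θ = θm + (1 / R) * (-(s ^ 2) * (v - vm) ^ 2 + (R * θm / vm - s ^ 2 * vm) * (v - vm)) := by
  have hp : R * θ / v = R * θm / vm - s ^ 2 * (v - vm) := by
    linear_combination hmom + s * hu
  field_simp at hp ⊢
  linear_combination hp

theorem heat_flux_eq {v u θ q : ℝ} (hγ : γ ≠ 1) (hR : R ≠ 0) (hv : v ≠ 0) (hvm : vm ≠ 0)
    (hu : u = um - s * (v - vm))
    (hθ : θ = θm + (1 / R) * (-(s ^ 2) * (v - vm) ^ 2 + (R * θm / vm - s ^ 2 * vm) * (v - vm)))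
    (henergy : -s * (R / (γ - 1) * θ + u ^ 2 / 2) + R * θ / v * u - q / v
      = -s * (R / (γ - 1) * θm + um ^ 2 / 2) + R * θm / vm * um) :
    (γ - 1) * q = v * (s * ((γ + 1) / 2 * s ^ 2 * (v - vm) ^ 2
      - (γ * (R * θm / vm) - s ^ 2 * vm) * (v - vm))) := by
  have hγ' : γ - 1 ≠ 0 := sub_ne_zero.mpr hγ
  subst hu hθ
  field_simp at henergy ⊢
  linear_combination -henergy

theorem deriv_temperature {p : ℝ} (hR : R ≠ 0) (hV : Differentiable ℝ V)
    (hΘ : ∀ ξ, Θ ξ = θm + (1 / R) * (-(s ^ 2) * (V ξ - vm) ^ 2 + (p - s ^ 2 * vm) * (V ξ - vm)))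
    (ξ : ℝ) :
    R * deriv Θ ξ = (p - s ^ 2 * vm - 2 * s ^ 2 * (V ξ - vm)) * deriv V ξ := by
  have hw : HasDerivAt (fun η => V η - vm) (deriv V ξ) ξ := (hV ξ).hasDerivAt.sub_const vm
  have hΘd : HasDerivAt Θ
      ((1 / R) * (-(s ^ 2) * (2 * (V ξ - vm) * deriv V ξ) + (p - s ^ 2 * vm) * deriv V ξ)) ξ := by
    rw [funext hΘ]
    exact ((((hw.pow 2).const_mul (-(s ^ 2))).add (hw.const_mul (p - s ^ 2 * vm))).const_mul
      (1 / R)).const_add θm |>.congr_deriv (by push_cast; ring)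
  rw [hΘd.deriv]
  field_simp
  ring

end ShockProfile

open ShockProfile in
theorem profile_reduction_general
    (R γ κ s1 vm um θm : ℝ)
    (hR : 0 < R) (hγ : 1 < γ) (hvm : 0 < vm)
    (V1 U1 Θ1 : ℝ → ℝ)
    (hV1 : ContDiff ℝ (⊤ : ℕ∞) V1) (hU1 : ContDiff ℝ (⊤ : ℕ∞) U1)
    (hΘ1 : ContDiff ℝ (⊤ : ℕ∞) Θ1)
    (hV1pos : ∀ ξ : ℝ, 0 < V1 ξ)
    -- the profile ODE system
    (ode1 : ∀ ξ : ℝ, -s1 * deriv V1 ξ - deriv U1 ξ = 0)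
    (ode2 : ∀ ξ : ℝ, -s1 * deriv U1 ξ + deriv (fun η => R * Θ1 η / V1 η) ξ = 0)
    (ode3 : ∀ ξ : ℝ, -s1 * deriv (fun η => R / (γ - 1) * Θ1 η + U1 η ^ 2 / 2) ξ
        + deriv (fun η => R * Θ1 η / V1 η * U1 η) ξ
        = deriv (fun η => κ * deriv Θ1 η / V1 η) ξ)
    -- far-field limits, with vanishing derivatives
    (limp : Tendsto (fun ξ => (V1 ξ, U1 ξ, Θ1 ξ)) atTop (nhds (vm, um, θm)))
    (limdp : Tendsto (fun ξ => (deriv V1 ξ, deriv U1 ξ, deriv Θ1 ξ)) atTop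
      (nhds ((0 : ℝ), (0 : ℝ), (0 : ℝ))))
    -- the denominator of H₁ does not vanish along the profile
    (hden : ∀ ξ : ℝ, R * θm / vm - s1 ^ 2 * vm - 2 * s1 ^ 2 * (V1 ξ - vm) ≠ 0) :
    ∀ ξ : ℝ,
      U1 ξ = um - s1 * (V1 ξ - vm) ∧
      Θ1 ξ = θm + (1 / R) * (-(s1 ^ 2) * (V1 ξ - vm) ^ 2
          + (R * θm / vm - s1 ^ 2 * vm) * (V1 ξ - vm)) ∧
      κ * deriv V1 ξ = H1fun R γ s1 vm (R * θm / vm) (V1 ξ) := by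
  have hV0 : ∀ ξ, V1 ξ ≠ 0 := fun ξ => (hV1pos ξ).ne'
  have hV := hV1.differentiable (by simp)
  have hU := hU1.differentiable (by simp)
  have hΘ := hΘ1.differentiable (by simp)
  have hΘ' := (contDiff_infty_iff_deriv.mp hΘ1).2.differentiable (by simp)
  have hVlim := limp.fst_nhds
  have hUlim := limp.snd_nhds.fst_nhds
  have hΘlim := limp.snd_nhds.snd_nhds
  have hΘ'lim := limdp.snd_nhds.snd_nhds
  have hvel := velocity_eq hV hU ode1 hVlim hUlim
  have htemp := fun ξ => temperature_eq_of_momentum hR.ne' (hV0 ξ) hvm.ne' (hvel ξ)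
    (momentum_integral hV hV0 hU hΘ ode2 hvm.ne' hVlim hUlim hΘlim ξ)
  intro ξ
  refine ⟨hvel ξ, htemp ξ, ?_⟩
  have hflux := heat_flux_eq hγ.ne' hR.ne' (hV0 ξ) hvm.ne' (hvel ξ) (htemp ξ)
    (energy_integral hV hV0 hU hΘ hΘ' ode3 hvm.ne' hVlim hUlim hΘlim hΘ'lim ξ)
  have hΘ'eq := deriv_temperature hR.ne' hV htemp ξ
  rw [H1fun, eq_div_iff (mul_ne_zero (sub_ne_zero.mpr hγ.ne') (hden ξ))]
  linear_combination (-(κ * (γ - 1))) * hΘ'eq + R * hflux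

/-- **Reduction of the viscous 1-shock profile system (2.9)–(2.10).** Any smooth
solution of the viscous 1-shock profile ODE system with the prescribed far-field
limits and vanishing derivatives at `±∞` satisfies `U₁ = u_m - s₁(V₁ - v_m)`,
`Θ₁ = θ_m + (1/R)(-s₁²(V₁-v_m)² + (p_m - s₁²v_m)(V₁-v_m))`, and `V₁` solves the
scalar ODE `κV₁' = H₁(V₁)`. -/
theorem profile_reduction
    (R γ κ s1 vminus uminus θminus vm um θm : ℝ)
    (hR : 0 < R) (hγ : 1 < γ) (hκ : 0 < κ) (hs1 : s1 < 0)
    (hvminus : 0 < vminus) (hvm : 0 < vm) (hθminus : 0 < θminus) (hθm : 0 < θm)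
    (V1 U1 Θ1 : ℝ → ℝ)
    (hV1 : ContDiff ℝ (⊤ : ℕ∞) V1) (hU1 : ContDiff ℝ (⊤ : ℕ∞) U1)
    (hΘ1 : ContDiff ℝ (⊤ : ℕ∞) Θ1)
    (hV1pos : ∀ ξ : ℝ, 0 < V1 ξ)
    -- the profile ODE system
    (ode1 : ∀ ξ : ℝ, -s1 * deriv V1 ξ - deriv U1 ξ = 0)
    (ode2 : ∀ ξ : ℝ, -s1 * deriv U1 ξ + deriv (fun η => R * Θ1 η / V1 η) ξ = 0)
    (ode3 : ∀ ξ : ℝ, -s1 * deriv (fun η => R / (γ - 1) * Θ1 η + U1 η ^ 2 / 2) ξ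
        + deriv (fun η => R * Θ1 η / V1 η * U1 η) ξ
        = deriv (fun η => κ * deriv Θ1 η / V1 η) ξ)
    -- far-field limits, with vanishing derivatives
    (limm : Tendsto (fun ξ => (V1 ξ, U1 ξ, Θ1 ξ)) atBot (nhds (vminus, uminus, θminus)))
    (limp : Tendsto (fun ξ => (V1 ξ, U1 ξ, Θ1 ξ)) atTop (nhds (vm, um, θm)))
    (limdm : Tendsto (fun ξ => (deriv V1 ξ, deriv U1 ξ, deriv Θ1 ξ)) atBot
      (nhds ((0 : ℝ), (0 : ℝ), (0 : ℝ))))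
    (limdp : Tendsto (fun ξ => (deriv V1 ξ, deriv U1 ξ, deriv Θ1 ξ)) atTop
      (nhds ((0 : ℝ), (0 : ℝ), (0 : ℝ))))
    -- Rankine–Hugoniot conditions
    (RH1 : -s1 * (vm - vminus) - (um - uminus) = 0)
    (RH2 : -s1 * (um - uminus) + (R * θm / vm - R * θminus / vminus) = 0)
    (RH3 : -s1 * ((R * θm / (γ - 1) + um ^ 2 / 2) - (R * θminus / (γ - 1) + uminus ^ 2 / 2))
        + (R * θm / vm * um - R * θminus / vminus * uminus) = 0)
    -- the denominator of H₁ does not vanish along the profile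
    (hden : ∀ ξ : ℝ, R * θm / vm - s1 ^ 2 * vm - 2 * s1 ^ 2 * (V1 ξ - vm) ≠ 0) :
    ∀ ξ : ℝ,
      U1 ξ = um - s1 * (V1 ξ - vm) ∧
      Θ1 ξ = θm + (1 / R) * (-(s1 ^ 2) * (V1 ξ - vm) ^ 2
          + (R * θm / vm - s1 ^ 2 * vm) * (V1 ξ - vm)) ∧
      κ * deriv V1 ξ = H1fun R γ s1 vm (R * θm / vm) (V1 ξ) :=
  profile_reduction_general R γ κ s1 vm um θm hR hγ hvm V1 U1 Θ1 hV1 hU1 hΘ1 hV1pos ode1 ode2 ode3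
    limp limdp hden
end
end

section
/- There exists δ̄ > 0 depending only on (v₋,u₋,θ₋) such that: if (v_m,u_m,θ_m) with v_m,θ_m > 0 and s₁ < 0 satisfy the Rankine–Hugoniot conditions and the entropy condition for a 1-shock, and |(v_m−v₋, u_m−u₋, θ_m−θ₋)| ≤ δ̄, then p_m < s₁²v_m < γp_m and p₋ < γp₋ < s₁²v₋. -/
set_option maxHeartbeats 1000000 in
/-- **The sign conditions (2.12) hold for weak 1-shocks.** There is `δ̄ > 0`
depending only on `(v₋,u₋,θ₋)` such that any 1-shock with intermediate state
`δ̄`-close to the left state satisfies `p_m < s₁²v_m < γp_m` and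
`p₋ < γp₋ < s₁²v₋`. -/
theorem weak_shock_sign_conditions
    (R γ : ℝ) (hR : 0 < R) (hγ : 1 < γ)
    (vminus uminus θminus : ℝ) (hvminus : 0 < vminus) (hθminus : 0 < θminus) :
    ∃ δbar : ℝ, 0 < δbar ∧
      ∀ vm um θm s1 : ℝ, 0 < vm → 0 < θm → s1 < 0 →
        -- Rankine–Hugoniot conditions
        (-s1 * (vm - vminus) - (um - uminus) = 0) →
        (-s1 * (um - uminus) + (R * θm / vm - R * θminus / vminus) = 0) →
        (-s1 * ((R * θm / (γ - 1) + um ^ 2 / 2) - (R * θminus / (γ - 1) + uminus ^ 2 / 2))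
            + (R * θm / vm * um - R * θminus / vminus * uminus) = 0) →
        -- entropy condition
        s1 < -Real.sqrt (γ * (R * θminus / vminus) / vminus) →
        -Real.sqrt (γ * (R * θm / vm) / vm) < s1 →
        -- the shock is weak
        |vm - vminus| + |um - uminus| + |θm - θminus| ≤ δbar →
        (R * θm / vm < s1 ^ 2 * vm ∧
         s1 ^ 2 * vm < γ * (R * θm / vm) ∧
         R * θminus / vminus < γ * (R * θminus / vminus) ∧
         γ * (R * θminus / vminus) < s1 ^ 2 * vminus) := by
  have hγ0 : (0:ℝ) < γ := by linarith
  refine ⟨min (vminus * (γ - 1) / (4 * γ)) (θminus * (γ - 1) / 4), ?_, ?_⟩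
  · have h1 : (0:ℝ) < γ - 1 := by linarith
    apply lt_min <;> positivity
  intro vm um θm s1 hvm hθm hs1 hRH1 hRH2 hRH3 hE1 hE2 hδ
  -- extract the smallness bounds
  have habs1 : |vm - vminus| ≤ vminus * (γ - 1) / (4 * γ) := by
    have := abs_nonneg (um - uminus); have := abs_nonneg (θm - θminus)
    have := min_le_left (vminus * (γ - 1) / (4 * γ)) (θminus * (γ - 1) / 4)
    linarith
  have habs2 : |θm - θminus| ≤ θminus * (γ - 1) / 4 := by
    have := abs_nonneg (um - uminus); have := abs_nonneg (vm - vminus)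
    have := min_le_right (vminus * (γ - 1) / (4 * γ)) (θminus * (γ - 1) / 4)
    linarith
  have h4γ : (0:ℝ) < 4 * γ := by linarith
  have hv' : (vminus - vm) * (4 * γ) ≤ vminus * (γ - 1) := by
    have h1 := (abs_le.mp habs1).1
    exact (le_div_iff₀ h4γ).mp (by linarith)
  have hθ' : θm ≤ θminus + θminus * (γ - 1) / 4 := by
    have h2 := (abs_le.mp habs2).2
    linarith
  -- entropy conditions squared
  have hA : (0:ℝ) ≤ γ * (R * θminus / vminus) / vminus := by positivity
  have hB : (0:ℝ) ≤ γ * (R * θm / vm) / vm := by positivity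
  have ha : γ * (R * θminus / vminus) / vminus < s1 ^ 2 := by
    nlinarith [Real.sq_sqrt hA, Real.sqrt_nonneg (γ * (R * θminus / vminus) / vminus), hE1]
  have hb : s1 ^ 2 < γ * (R * θm / vm) / vm := by
    nlinarith [Real.sq_sqrt hB, Real.sqrt_nonneg (γ * (R * θm / vm) / vm), hE2, hs1]
  have ha4 : γ * (R * θminus / vminus) < s1 ^ 2 * vminus := (div_lt_iff₀ hvminus).mp ha
  -- key smallness consequence: γ θ₋ v_m² > θ_m v₋²
  have h5 : (0:ℝ) < (5 * γ - 1) * (γ - 1) := by nlinarith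
  have hvm_lb : vminus * (3 * γ + 1) ≤ 4 * γ * vm := by nlinarith [hv']
  have hvlb_pos : (0:ℝ) < vminus * (3 * γ + 1) := by positivity
  have hsq : (vminus * (3 * γ + 1)) ^ 2 ≤ (4 * γ * vm) ^ 2 := by
    apply sq_le_sq' <;> nlinarith
  have hkey : θm * vminus ^ 2 < γ * θminus * vm ^ 2 := by 
    nlinarith [mul_le_mul_of_nonneg_left hsq hθminus.le,
      mul_le_mul_of_nonneg_right hθ' (le_of_lt (mul_pos hγ0 (pow_pos hvminus 2))),
      mul_pos (mul_pos hθminus (pow_pos hvminus 2)) h5, hγ0]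
  -- first conclusion
  have ha'' : γ * (R * θminus) < s1 ^ 2 * (vminus * vminus) := by
    have := mul_lt_mul_of_pos_right ha4 hvminus
    calc γ * (R * θminus) = γ * (R * θminus / vminus) * vminus := by
          field_simp
      _ < s1 ^ 2 * vminus * vminus := this
      _ = s1 ^ 2 * (vminus * vminus) := by ring
  have goal1 : R * θm / vm < s1 ^ 2 * vm := by
    rw [div_lt_iff₀ hvm]
    nlinarith [mul_lt_mul_of_pos_right ha'' (mul_pos hvm hvm),
      mul_lt_mul_of_pos_left hkey hR, mul_pos hvminus hvminus, sq_nonneg s1]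
  refine ⟨goal1, (lt_div_iff₀ hvm).mp hb, ?_, ha4⟩
  have hp : (0:ℝ) < R * θminus / vminus := by positivity
  nlinarith [hp]
end

section
/- Let sᵢ ≠ 0, δᵢ ∈ (0,1], c > 0, βᵢ ∈ ℝ with δᵢ|βᵢ| ≤ K, and let Zᵢ satisfy |Zᵢ(x,t) − z_m| ≤ Cδᵢe^{−cδᵢ|x−sᵢt+βᵢ|} on the side of x = sᵢt − βᵢ away from the shock's far state and |Zᵢ(x,t) − z_m| ≤ Cδᵢ everywhere. Let Θ̃(x,t) = θ_m + β₂(4πa(1+t))^{−1/2}e^{−x²/(4a(1+t))} with a > 0. Then there exist positive constants c′ and C′, depending only on sᵢ, c, a and K, such that for all x ∈ ℝ, t ≥ 0 and δ ≤ δᵢ: |Zᵢ(x,t) − z_m|·|Θ̃(x,t) − θ_m| ≤ C′|β₂|δ^{3/2}e^{−c′δ(|x|+t)} + C′|β₂|(1+t)^{−3/2}e^{−c′x²/(1+t)} + C′(δ + |β₂|)e^{−c′(|x|+t)}. -/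
noncomputable section

private lemma ue_le_one {u : ℝ} (hu : 0 ≤ u) : u * Real.exp (-u) ≤ 1 := by
  have h1 := Real.add_one_le_exp u
  have h2 : Real.exp (-u) * Real.exp u = 1 := by
    rw [← Real.exp_add]; simp
  nlinarith [Real.exp_pos (-u), mul_le_mul_of_nonneg_left h1 (Real.exp_pos (-u)).le]

private lemma aux_sqrt_le {ε s : ℝ} (hs : 0 < s) (hε : 0 ≤ ε) (h : ε ≤ s ^ 2 / 64) :
    Real.sqrt ε ≤ s / 8 := by
  nlinarith [Real.sq_sqrt hε, Real.sqrt_nonneg ε]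

private lemma aux_xB {s ε x t : ℝ} (hs : 0 < s) (hε : 0 < ε) (hε8 : ε ≤ s / 8)
    (hε64 : ε ≤ s ^ 2 / 64) (ht : 0 ≤ t) (hA : x ^ 2 < ε * (|x| + t) * (1 + t)) :
    |x| ≤ s / 4 * (1 + t) := by
  have ht1 : (0:ℝ) < 1 + t := by linarith
  have hre : Real.sqrt ε ^ 2 = ε := Real.sq_sqrt hε.le
  have hr8 : Real.sqrt ε ≤ s / 8 := aux_sqrt_le hs hε.le hε64
  have hax : |x| ^ 2 = x ^ 2 := sq_abs x
  by_cases hxs : |x| ≤ Real.sqrt ε * (1 + t)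
  · nlinarith [Real.sqrt_nonneg ε]
  · push_neg at hxs
    have hx0 : 0 < |x| := lt_of_le_of_lt (by positivity) hxs
    by_contra hcon
    push_neg at hcon
    have h1 : ε * (t * (1 + t)) ≤ ε * ((1 + t) * (1 + t)) :=
      mul_le_mul_of_nonneg_left (by nlinarith) hε.le
    have hre2 : Real.sqrt ε * (1 + t) * (Real.sqrt ε * (1 + t)) = ε * ((1 + t) * (1 + t)) := by
      linear_combination ((1 + t) * (1 + t)) * hre
    have h2 : Real.sqrt ε * (1 + t) * (Real.sqrt ε * (1 + t)) ≤ s / 8 * (1 + t) * |x| :=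
      mul_le_mul (mul_le_mul_of_nonneg_right hr8 ht1.le) hxs.le (by positivity) (by positivity)
    have h3 : ε * (|x| * (1 + t)) ≤ s / 8 * (|x| * (1 + t)) :=
      mul_le_mul_of_nonneg_right hε8 (mul_nonneg (abs_nonneg x) ht1.le)
    have h4 : s / 4 * (1 + t) * |x| < |x| * |x| :=
      mul_lt_mul_of_pos_right hcon hx0
    nlinarith [h1, h2, h3, h4, hre2]

private lemma aux_M {s K δi m t : ℝ} (hs : 0 < s) (hδi : 0 < δi) (hδi1 : δi ≤ 1)
    (hm : 0 ≤ m) (hδm : δi * m ≤ K) (hBt : t ≤ 4 / (3 * s) * (s / 4 + m + 1)) :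
    δi * (1 + t) ≤ 1 + 4 / (3 * s) * (s / 4 + K + 1) := by
  have h4 : (0:ℝ) ≤ 4 / (3 * s) := by positivity
  have h1 : δi * t ≤ δi * (4 / (3 * s) * (s / 4 + m + 1)) :=
    mul_le_mul_of_nonneg_left hBt hδi.le
  have h2 : δi * (4 / (3 * s) * (s / 4 + m + 1)) = 4 / (3 * s) * (δi * (s / 4) + δi * m + δi) := by
    ring
  have h3 : δi * (s / 4) ≤ s / 4 := by nlinarith
  have h5 : δi * (s / 4) + δi * m + δi ≤ s / 4 + K + 1 := by linarith
  have h6 : 4 / (3 * s) * (δi * (s / 4) + δi * m + δi) ≤ 4 / (3 * s) * (s / 4 + K + 1) :=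
    mul_le_mul_of_nonneg_left h5 h4
  linarith

private lemma aux_arg {c s δi m K e t : ℝ} (hc : 0 < c) (hs : 0 < s) (hδi : 0 < δi)
    (hδi1 : δi ≤ 1) (hδm : δi * m ≤ K) (ht : 0 ≤ t)
    (he : 3 * s / 4 * t - s / 4 - m ≤ e) :
    -c * δi * e ≤ c * (s / 4 + K) + -(3 * c * s / 4 * (δi * t)) := by
  have h1 : c * δi * (3 * s / 4 * t - s / 4 - m) ≤ c * δi * e :=
    mul_le_mul_of_nonneg_left he (by positivity)
  have h2 : c * δi * (s / 4) ≤ c * (s / 4) := by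
    nlinarith [mul_le_mul_of_nonneg_left hδi1 (by positivity : (0:ℝ) ≤ c * (s / 4))]
  have h3 : c * (δi * m) ≤ c * K := mul_le_mul_of_nonneg_left hδm hc.le
  nlinarith [h1, h2, h3]

private lemma aux_key2 {κ δi t : ℝ} (hκ : 0 < κ) (hδi : 0 < δi) (hδi1 : δi ≤ 1)
    (ht : 0 ≤ t) : δi * Real.exp (-(κ * (δi * t))) * (1 + t) ≤ 1 + 1 / κ := by
  have hu : 0 ≤ κ * (δi * t) := by positivity
  have h1 := ue_le_one hu
  have h2 : Real.exp (-(κ * (δi * t))) ≤ 1 := Real.exp_le_one_iff.2 (neg_nonpos.2 hu)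
  have h3 : δi * t * Real.exp (-(κ * (δi * t))) ≤ 1 / κ := by
    rw [le_div_iff₀ hκ]; nlinarith [h1]
  have h4 : δi * Real.exp (-(κ * (δi * t))) ≤ 1 :=
    mul_le_one₀ hδi1 (Real.exp_pos _).le h2
  nlinarith [h3, h4]

set_option maxHeartbeats 1600000 in
private lemma key_pos (s c a K Cz δi β β2 : ℝ)
    (hs : 0 < s) (hc : 0 < c) (ha : 0 < a) (hK : 0 ≤ K) (hCz : 0 < Cz)
    (hδi : 0 < δi) (hδi1 : δi ≤ 1) (hβ : δi * |β| ≤ K)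
    (F : ℝ → ℝ → ℝ)
    (hF0 : ∀ x t : ℝ, 0 ≤ t → 0 ≤ F x t)
    (hFbd : ∀ x t : ℝ, 0 ≤ t → F x t ≤ Cz * δi)
    (hFdec : ∀ x t : ℝ, 0 ≤ t → x < s * t - β →
      F x t ≤ Cz * δi * Real.exp (-c * δi * |x - s * t + β|)) :
    ∃ c' C' : ℝ, 0 < c' ∧ 0 < C' ∧ ∀ x t : ℝ, 0 ≤ t →
      F x t * (|β2| / (Real.sqrt a * Real.sqrt (1 + t)) * Real.exp (-x ^ 2 / (4 * a * (1 + t))))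
        ≤ C' * |β2| / (1 + t) ^ ((3 : ℝ) / 2) * Real.exp (-c' * x ^ 2 / (1 + t))
          + C' * |β2| * Real.exp (-c' * (|x| + t)) := by
  have hsa : 0 < Real.sqrt a := Real.sqrt_pos.2 ha
  obtain ⟨ε, hε, hε1, hε8, hε64⟩ :
      ∃ ε : ℝ, 0 < ε ∧ ε ≤ 1 ∧ ε ≤ s / 8 ∧ ε ≤ s ^ 2 / 64 := by
    refine ⟨min 1 (min (s / 8) (s ^ 2 / 64)), ?_, min_le_left _ _,
      le_trans (min_le_right _ _) (min_le_left _ _),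
      le_trans (min_le_right _ _) (min_le_right _ _)⟩
    exact lt_min one_pos (lt_min (by positivity) (by positivity))
  obtain ⟨κ, hκ, hκeq⟩ : ∃ κ : ℝ, 0 < κ ∧ κ = 3 * c * s / 4 := ⟨_, by positivity, rfl⟩
  obtain ⟨M, hM, hMeq⟩ : ∃ M : ℝ, 0 < M ∧ M = 1 + 4 / (3 * s) * (s / 4 + K + 1) :=
    ⟨_, by positivity, rfl⟩
  obtain ⟨c', hc', hc'4a⟩ : ∃ c' : ℝ, 0 < c' ∧ c' * (4 * a) = ε := by
    refine ⟨ε / (4 * a), by positivity, ?_⟩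
    field_simp
  obtain ⟨C', hC', hCA, hCB, hCC⟩ :
      ∃ C' : ℝ, 0 < C' ∧ Cz / Real.sqrt a ≤ C' ∧ Cz * M ≤ C' * Real.sqrt a ∧
        Cz * Real.exp (c * (s / 4 + K)) * (1 + 1 / κ) ≤ C' * Real.sqrt a := by
    have hexp : 1 ≤ Real.exp (c * (s / 4 + K)) :=
      Real.one_le_exp (by positivity)
    have hid : Cz / Real.sqrt a * Real.exp (c * (s / 4 + K)) * (1 + M + 1 / κ) * Real.sqrt a
        = Cz * Real.exp (c * (s / 4 + K)) * (1 + M + 1 / κ) := by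
      field_simp
    have h1κ : 0 < 1 / κ := by positivity
    have hqa : 0 < Cz / Real.sqrt a := by positivity
    refine ⟨Cz / Real.sqrt a * Real.exp (c * (s / 4 + K)) * (1 + M + 1 / κ),
      by positivity, ?_, ?_, ?_⟩
    · have h : (1:ℝ) ≤ Real.exp (c * (s / 4 + K)) * (1 + M + 1 / κ) := by nlinarith
      nlinarith [mul_le_mul_of_nonneg_left h hqa.le]
    · rw [hid]
      nlinarith [mul_le_mul_of_nonneg_right hexp (mul_pos hCz hM).le,
        mul_pos (mul_pos hCz (Real.exp_pos (c * (s / 4 + K)))) h1κ,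
        mul_pos hCz (Real.exp_pos (c * (s / 4 + K)))]
    · rw [hid]
      nlinarith [mul_pos (mul_pos hCz (Real.exp_pos (c * (s / 4 + K)))) hM]
  refine ⟨c', C', hc', hC', ?_⟩
  intro x t ht
  have ht1 : (0:ℝ) < 1 + t := by linarith
  set S : ℝ := Real.sqrt (1 + t) with hSdef
  have hS0 : 0 < S := Real.sqrt_pos.2 ht1
  have hS2 : S ^ 2 = 1 + t := Real.sq_sqrt ht1.le
  have hS1 : 1 ≤ S := by
    have h := Real.sqrt_le_sqrt (show (1:ℝ) ≤ 1 + t by linarith)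
    rwa [Real.sqrt_one] at h
  have hrpow : (1 + t) ^ ((3 : ℝ) / 2) = (1 + t) * S := by
    rw [show (3 : ℝ) / 2 = 1 + 1 / 2 by norm_num, Real.rpow_add ht1, Real.rpow_one,
      hSdef, Real.sqrt_eq_rpow]
  set E : ℝ := Real.exp (-x ^ 2 / (4 * a * (1 + t))) with hEdef
  have hEpos : 0 < E := Real.exp_pos _
  set G : ℝ := |β2| / (Real.sqrt a * S) * E with hGdef
  have hG0 : 0 ≤ G := by positivity
  have hE2 : E ≤ Real.exp (-c' * x ^ 2 / (1 + t)) := by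
    apply Real.exp_le_exp.2
    rw [div_le_div_iff₀ (by positivity) ht1]
    have heq : c' * x ^ 2 * (4 * a * (1 + t)) = ε * (x ^ 2 * (1 + t)) := by
      linear_combination x ^ 2 * (1 + t) * hc'4a
    have hεle : ε * (x ^ 2 * (1 + t)) ≤ 1 * (x ^ 2 * (1 + t)) :=
      mul_le_mul_of_nonneg_right hε1 (by positivity)
    nlinarith [heq, hεle]
  have second : ∀ D : ℝ, 0 ≤ D → δi * (1 + t) ≤ D → Cz * D ≤ C' * Real.sqrt a →
      Cz * δi * G ≤ C' * |β2| / (1 + t) ^ ((3 : ℝ) / 2) * Real.exp (-c' * x ^ 2 / (1 + t)) := by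
    intro D hD0 hD hDC
    have hnum : Cz * δi * |β2| / (Real.sqrt a * S) ≤ C' * |β2| / ((1 + t) * S) := by
      rw [div_le_div_iff₀ (by positivity) (by positivity)]
      have e1 : Cz * (δi * (1 + t)) ≤ Cz * D := mul_le_mul_of_nonneg_left hD hCz.le
      have e2 : Cz * (δi * (1 + t)) ≤ C' * Real.sqrt a := e1.trans hDC
      have e3 : Cz * (δi * (1 + t)) * (|β2| * S) ≤ C' * Real.sqrt a * (|β2| * S) :=
        mul_le_mul_of_nonneg_right e2 (by positivity)
      linarith [e3]
    calc Cz * δi * G = Cz * δi * |β2| / (Real.sqrt a * S) * E := by rw [hGdef]; ring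
      _ ≤ C' * |β2| / ((1 + t) * S) * Real.exp (-c' * x ^ 2 / (1 + t)) :=
          mul_le_mul hnum hE2 hEpos.le (by positivity)
      _ = C' * |β2| / (1 + t) ^ ((3 : ℝ) / 2) * Real.exp (-c' * x ^ 2 / (1 + t)) := by
          rw [hrpow]
  by_cases hA : ε * (|x| + t) * (1 + t) ≤ x ^ 2
  · -- third-term case
    have hE3 : E ≤ Real.exp (-c' * (|x| + t)) := by
      apply Real.exp_le_exp.2
      have h1 : c' * (|x| + t) ≤ x ^ 2 / (4 * a * (1 + t)) := by
        rw [le_div_iff₀ (by positivity)]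
        have heq : c' * (|x| + t) * (4 * a * (1 + t)) = ε * (|x| + t) * (1 + t) := by
          linear_combination (|x| + t) * (1 + t) * hc'4a
        linarith [heq, hA]
      rw [neg_div]
      linarith
    have step : F x t * G ≤ C' * |β2| * Real.exp (-c' * (|x| + t)) := by
      calc F x t * G ≤ Cz * δi * G :=
            mul_le_mul_of_nonneg_right (hFbd x t ht) hG0
        _ = Cz * δi / (Real.sqrt a * S) * |β2| * E := by rw [hGdef]; ring
        _ ≤ Cz / Real.sqrt a * |β2| * Real.exp (-c' * (|x| + t)) := by
            apply mul_le_mul _ hE3 hEpos.le (by positivity)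
            apply mul_le_mul_of_nonneg_right _ (abs_nonneg β2)
            rw [div_le_div_iff₀ (by positivity) hsa]
            have e1 : Cz * Real.sqrt a * δi ≤ Cz * Real.sqrt a * S :=
              mul_le_mul_of_nonneg_left (hδi1.trans hS1) (by positivity)
            linarith [e1]
        _ ≤ C' * |β2| * Real.exp (-c' * (|x| + t)) := by
            apply mul_le_mul_of_nonneg_right _ (Real.exp_pos _).le
            exact mul_le_mul_of_nonneg_right hCA (abs_nonneg β2)
    have h2nn : 0 ≤ C' * |β2| / (1 + t) ^ ((3 : ℝ) / 2) * Real.exp (-c' * x ^ 2 / (1 + t)) := by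
      positivity
    linarith
  · push_neg at hA
    have hxB : |x| ≤ s / 4 * (1 + t) := aux_xB hs hε hε8 hε64 ht hA
    have hβmax : max β 0 ≤ |β| := max_le (le_abs_self β) (abs_nonneg β)
    have hβ0 : δi * max β 0 ≤ K :=
      le_trans (mul_le_mul_of_nonneg_left hβmax hδi.le) hβ
    have hβ0nn : 0 ≤ max β 0 := le_max_right β 0
    obtain ⟨T0, hT0eq⟩ : ∃ T0 : ℝ, T0 = 4 / (3 * s) * (s / 4 + max β 0 + 1) := ⟨_, rfl⟩
    by_cases hBt : t ≤ T0
    · -- bounded-time case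
      have hδiM : δi * (1 + t) ≤ M := by
        rw [hMeq]
        exact aux_M hs hδi hδi1 hβ0nn hβ0 (hT0eq ▸ hBt)
      have step := second M hM.le hδiM hCB
      have h3nn : 0 ≤ C' * |β2| * Real.exp (-c' * (|x| + t)) := by positivity
      have h1 : F x t * G ≤ Cz * δi * G := mul_le_mul_of_nonneg_right (hFbd x t ht) hG0
      linarith
    · -- large-time case: use the shock decay
      push_neg at hBt
      have hT3 : 3 * s / 4 * T0 = s / 4 + max β 0 + 1 := by
        rw [hT0eq]; field_simp
      have he : 3 * s / 4 * t - s / 4 - max β 0 ≤ s * t - β - x := by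
        have h := le_max_left β 0
        have hx' : x ≤ s / 4 * (1 + t) := le_trans (le_abs_self x) hxB
        linarith
      have hepos : 0 < s * t - β - x := by
        have h1 : 3 * s / 4 * T0 < 3 * s / 4 * t :=
          mul_lt_mul_of_pos_left hBt (by positivity)
        rw [hT3] at h1
        linarith
      have hshock : x < s * t - β := by linarith
      have habs : |x - s * t + β| = s * t - β - x := by
        rw [abs_of_neg (by linarith : x - s * t + β < 0)]; ring
      have hFx : F x t ≤ Cz * δi * Real.exp (-c * δi * (s * t - β - x)) := by
        have h := hFdec x t ht hshock
        rwa [habs] at h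
      have harg : -c * δi * (s * t - β - x) ≤ c * (s / 4 + K) + -(κ * (δi * t)) := by
        rw [hκeq]
        exact aux_arg hc hs hδi hδi1 hβ0 ht he
      have hFx2 : F x t ≤ Cz * δi * (Real.exp (c * (s / 4 + K)) * Real.exp (-(κ * (δi * t)))) := by
        refine le_trans hFx ?_
        have h := Real.exp_le_exp.2 harg
        rw [Real.exp_add] at h
        exact mul_le_mul_of_nonneg_left h (by positivity)
      have hkey2 : δi * Real.exp (-(κ * (δi * t))) * (1 + t) ≤ 1 + 1 / κ :=
        aux_key2 hκ hδi hδi1 ht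
      have hDC : Cz * (1 + 1 / κ) * Real.exp (c * (s / 4 + K)) ≤ C' * Real.sqrt a := by
        linarith [hCC]
      have hnum : Cz * δi * (Real.exp (c * (s / 4 + K)) * Real.exp (-(κ * (δi * t)))) * |β2| /
          (Real.sqrt a * S) ≤ C' * |β2| / ((1 + t) * S) := by
        rw [div_le_div_iff₀ (by positivity) (by positivity)]
        have h1 : Cz * Real.exp (c * (s / 4 + K)) * |β2| * S *
            (δi * Real.exp (-(κ * (δi * t))) * (1 + t))
            ≤ Cz * Real.exp (c * (s / 4 + K)) * |β2| * S * (1 + 1 / κ) :=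
          mul_le_mul_of_nonneg_left hkey2 (by positivity)
        have h2 : Cz * (1 + 1 / κ) * Real.exp (c * (s / 4 + K)) * (|β2| * S)
            ≤ C' * Real.sqrt a * (|β2| * S) :=
          mul_le_mul_of_nonneg_right hDC (by positivity)
        linarith [h1, h2]
      have step : F x t * G ≤ C' * |β2| / (1 + t) ^ ((3 : ℝ) / 2) *
          Real.exp (-c' * x ^ 2 / (1 + t)) := by
        calc F x t * G ≤ Cz * δi * (Real.exp (c * (s / 4 + K)) * Real.exp (-(κ * (δi * t)))) * G :=
              mul_le_mul_of_nonneg_right hFx2 hG0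
          _ = Cz * δi * (Real.exp (c * (s / 4 + K)) * Real.exp (-(κ * (δi * t)))) * |β2| /
              (Real.sqrt a * S) * E := by rw [hGdef]; ring
          _ ≤ C' * |β2| / ((1 + t) * S) * Real.exp (-c' * x ^ 2 / (1 + t)) :=
              mul_le_mul hnum hE2 hEpos.le (by positivity)
          _ = C' * |β2| / (1 + t) ^ ((3 : ℝ) / 2) * Real.exp (-c' * x ^ 2 / (1 + t)) := by
              rw [hrpow]
      have h3nn : 0 ≤ C' * |β2| * Real.exp (-c' * (|x| + t)) := by positivity
      linarith

/-- The heat-kernel diffusion wave profile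
`Θ̃(x,t) = θ_m + β₂(4πa(1+t))^{-1/2} e^{-x²/(4a(1+t))}`. -/
def heatWave (a θm β2 : ℝ) (x t : ℝ) : ℝ :=
  θm + β2 / Real.sqrt (4 * Real.pi * a * (1 + t)) * Real.exp (-x ^ 2 / (4 * a * (1 + t)))

private lemma heat_bound (a θm β2 x t : ℝ) (ha : 0 < a) (ht : 0 ≤ t) :
    |heatWave a θm β2 x t - θm|
      ≤ |β2| / (Real.sqrt a * Real.sqrt (1 + t)) * Real.exp (-x ^ 2 / (4 * a * (1 + t))) := by
  have ht1 : (0:ℝ) < 1 + t := by linarith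
  have h1 : heatWave a θm β2 x t - θm
      = β2 / Real.sqrt (4 * Real.pi * a * (1 + t)) * Real.exp (-x ^ 2 / (4 * a * (1 + t))) := by
    unfold heatWave; ring
  rw [h1, abs_mul, abs_of_pos (Real.exp_pos _), abs_div,
    abs_of_nonneg (Real.sqrt_nonneg _)]
  apply mul_le_mul_of_nonneg_right _ (Real.exp_pos _).le
  have hle : Real.sqrt a * Real.sqrt (1 + t) ≤ Real.sqrt (4 * Real.pi * a * (1 + t)) := by
    rw [← Real.sqrt_mul ha.le]
    apply Real.sqrt_le_sqrt
    nlinarith [Real.pi_gt_three, mul_pos ha ht1]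
  exact div_le_div_of_nonneg_left (abs_nonneg β2) (by positivity) hle


/-- **Shock–diffusion-wave interaction estimate (2.47).** If `Z` is a shifted
viscous `i`-shock profile of strength `δᵢ`, speed `s ≠ 0` and shift `β` around the
intermediate state `z_m` (satisfying the one-sided exponential decay on the side
of `x = st - β` away from its far state, and a uniform `O(δᵢ)` bound), and `Θ̃` is
the heat-kernel diffusion wave of mass `β₂`, then for every `δ ≤ δᵢ` the product
`|Z - z_m||Θ̃ - θ_m|` obeys the three-term bound of (2.47). -/
theorem shock_diffusion_interaction
    (s c a K Cz δi β zm θm β2 : ℝ)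
    (hs : s ≠ 0) (hc : 0 < c) (ha : 0 < a) (hK : 0 ≤ K) (hCz : 0 < Cz)
    (hδi : 0 < δi) (hδi1 : δi ≤ 1) (hβ : δi * |β| ≤ K)
    (Z : ℝ → ℝ → ℝ)
    (hZbd : ∀ x t : ℝ, 0 ≤ t → |Z x t - zm| ≤ Cz * δi)
    (hZdecayPos : 0 < s → ∀ x t : ℝ, 0 ≤ t → x < s * t - β →
      |Z x t - zm| ≤ Cz * δi * Real.exp (-c * δi * |x - s * t + β|))
    (hZdecayNeg : s < 0 → ∀ x t : ℝ, 0 ≤ t → s * t - β < x →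
      |Z x t - zm| ≤ Cz * δi * Real.exp (-c * δi * |x - s * t + β|)) :
    ∃ c' C' : ℝ, 0 < c' ∧ 0 < C' ∧
      ∀ δ : ℝ, 0 < δ → δ ≤ δi → ∀ x t : ℝ, 0 ≤ t →
        |Z x t - zm| * |heatWave a θm β2 x t - θm|
          ≤ C' * |β2| * δ ^ ((3 : ℝ) / 2) * Real.exp (-c' * δ * (|x| + t))
            + C' * |β2| / (1 + t) ^ ((3 : ℝ) / 2) * Real.exp (-c' * x ^ 2 / (1 + t))
            + C' * (δ + |β2|) * Real.exp (-c' * (|x| + t)) := by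
  rcases hs.lt_or_gt with hneg | hpos
  · -- left-moving shock: reflect x ↦ -x
    obtain ⟨c', C', hc', hC', hbd⟩ :=
      key_pos (-s) c a K Cz δi (-β) β2 (by linarith) hc ha hK hCz hδi hδi1
        (by rwa [abs_neg])
        (fun x t => |Z (-x) t - zm|)
        (fun x t ht => abs_nonneg _)
        (fun x t ht => hZbd (-x) t ht)
        (fun x t ht hx => by
          have hx' : s * t - β < -x := by nlinarith [hx]
          have h := hZdecayNeg hneg (-x) t ht hx'
          rwa [show (-x) - s * t + β = -(x - (-s) * t + (-β)) by ring, abs_neg] at h)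
    refine ⟨c', C', hc', hC', ?_⟩
    intro δ hδ hδle x t ht
    have h1 := hbd (-x) t ht
    simp only [neg_neg, abs_neg, neg_sq] at h1
    have h2 : |Z x t - zm| * |heatWave a θm β2 x t - θm|
        ≤ |Z x t - zm| * (|β2| / (Real.sqrt a * Real.sqrt (1 + t)) *
          Real.exp (-x ^ 2 / (4 * a * (1 + t)))) :=
      mul_le_mul_of_nonneg_left (heat_bound a θm β2 x t ha ht) (abs_nonneg _)
    have h3 : C' * |β2| * Real.exp (-c' * (|x| + t))
        ≤ C' * (δ + |β2|) * Real.exp (-c' * (|x| + t)) := by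
      apply mul_le_mul_of_nonneg_right _ (Real.exp_pos _).le
      apply mul_le_mul_of_nonneg_left (by linarith [le_abs_self β2] : |β2| ≤ δ + |β2|) hC'.le
    have h4 : 0 ≤ C' * |β2| * δ ^ ((3 : ℝ) / 2) * Real.exp (-c' * δ * (|x| + t)) := by
      positivity
    linarith
  · -- right-moving shock
    obtain ⟨c', C', hc', hC', hbd⟩ :=
      key_pos s c a K Cz δi β β2 hpos hc ha hK hCz hδi hδi1 hβ
        (fun x t => |Z x t - zm|)
        (fun x t ht => abs_nonneg _)
        (fun x t ht => hZbd x t ht)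
        (fun x t ht hx => hZdecayPos hpos x t ht hx)
    refine ⟨c', C', hc', hC', ?_⟩
    intro δ hδ hδle x t ht
    have h1 := hbd x t ht
    have h2 : |Z x t - zm| * |heatWave a θm β2 x t - θm|
        ≤ |Z x t - zm| * (|β2| / (Real.sqrt a * Real.sqrt (1 + t)) *
          Real.exp (-x ^ 2 / (4 * a * (1 + t)))) :=
      mul_le_mul_of_nonneg_left (heat_bound a θm β2 x t ha ht) (abs_nonneg _)
    have h3 : C' * |β2| * Real.exp (-c' * (|x| + t))
        ≤ C' * (δ + |β2|) * Real.exp (-c' * (|x| + t)) := by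
      apply mul_le_mul_of_nonneg_right _ (Real.exp_pos _).le
      apply mul_le_mul_of_nonneg_left (by linarith [le_abs_self β2] : |β2| ≤ δ + |β2|) hC'.le
    have h4 : 0 ≤ C' * |β2| * δ ^ ((3 : ℝ) / 2) * Real.exp (-c' * δ * (|x| + t)) := by
      positivity
    linarith
end
end
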